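/- Let f : ℝ₊ × X → X be a continuous semiflow on a compact metric space and x ∈ X. If lim_{t→∞} d(f(t,x), f(t,q)) = 0 for some q ∈ X, then C_x = C_q, i.e., the two motions have the same minimal center of attraction. -/

import Mathlib

open MeasureTheory Filter Metric Set Topology
open scoped Classical

noncomputable section

/-- The set `S ⊆ ℝ` has density `α` in `[0,∞)`. -/
def HasDens (S : Set ℝ) (α : ℝ) : Prop :=
  Filter.Tendsto (fun T : ℝ => (MeasureTheory.volume (S ∩ Set.Icc 0 T)).toReal / T)
    Filter.atTop (nhds α)

/-- `f` is a continuous semiflow on `X` (time in `[0,∞)`). -/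
def IsSemiflow {X : Type*} [MetricSpace X] (f : ℝ → X → X) : Prop :=
  ContinuousOn (fun p : ℝ × X => f p.1 p.2) (Set.Ici 0 ×ˢ Set.univ) ∧
  (∀ x : X, f 0 x = x) ∧
  (∀ s t : ℝ, 0 ≤ s → 0 ≤ t → ∀ x : X, f s (f t x) = f (s + t) x)

/-- `C` is a center of attraction of the motion `f (t, x)`. -/
def IsCtr {X : Type*} [MetricSpace X] (f : ℝ → X → X) (x : X) (C : Set X) : Prop :=
  IsClosed C ∧ ∀ ε > (0 : ℝ), HasDens {t : ℝ | 0 ≤ t ∧ f t x ∈ Metric.thickening ε C} 1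

/-- `C` is the minimal center of attraction of the motion `f (t, x)`. -/
def IsMCA {X : Type*} [MetricSpace X] (f : ℝ → X → X) (x : X) (C : Set X) : Prop :=
  IsCtr f x C ∧ ∀ C' ⊆ C, IsCtr f x C' → C' = C

/-! If `d(f(t,x), f(t,q)) → 0`, every center of attraction of one motion is one of the other.
The intersection of two centers of the same motion is again a center: by compactness, points
`δ`-close to both are `ε`-close to the intersection, and two sets of density one meet in a set of
density one. Hence a minimal center lies in every center, so `C_x ⊆ C_q` and `C_q ⊆ C_x`. -/

lemma volume_inter_Icc_ne_top (S : Set ℝ) (T : ℝ) : volume (S ∩ Icc 0 T) ≠ ⊤ :=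
  (measure_inter_lt_top_of_right_ne_top (by simp)).ne

lemma volume_real_inter_Icc_le (S : Set ℝ) {T : ℝ} (hT : 0 ≤ T) :
    volume.real (S ∩ Icc 0 T) ≤ T := by
  calc volume.real (S ∩ Icc 0 T) ≤ volume.real (Icc 0 T) :=
        measureReal_mono inter_subset_right measure_Icc_lt_top.ne
    _ = T := by rw [Real.volume_real_Icc_of_le hT, sub_zero]

lemma hasDens_one_of_tendsto_of_le {S : Set ℝ} {g : ℝ → ℝ} (hg : Tendsto g atTop (𝓝 1))
    (hle : ∀ᶠ T in atTop, g T ≤ volume.real (S ∩ Icc 0 T) / T) : HasDens S 1 := by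
  refine tendsto_of_tendsto_of_tendsto_of_le_of_le' hg tendsto_const_nhds hle ?_
  filter_upwards [eventually_gt_atTop 0] with T hT
  exact (div_le_one hT).2 (volume_real_inter_Icc_le S hT.le)

lemma HasDens.one_of_inter_Ici_subset {S S' : Set ℝ} (hS : HasDens S 1) {T₀ : ℝ}
    (hsub : S ∩ Ici T₀ ⊆ S') : HasDens S' 1 := by
  have hlim : Tendsto (fun T => volume.real (S ∩ Icc 0 T) / T - max T₀ 0 / T) atTop (𝓝 1) := by
    have h := hS.sub ((tendsto_const_nhds (x := max T₀ 0)).div_atTop tendsto_id)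
    rwa [sub_zero] at h
  refine hasDens_one_of_tendsto_of_le hlim ?_
  filter_upwards [eventually_gt_atTop 0] with T hT
  have hcover : S ∩ Icc 0 T ⊆ (S' ∩ Icc 0 T) ∪ Icc 0 T₀ := by
    rintro t ⟨htS, ht0, htT⟩
    by_cases htT₀ : T₀ ≤ t
    · exact Or.inl ⟨hsub ⟨htS, htT₀⟩, ht0, htT⟩
    · exact Or.inr ⟨ht0, (not_le.1 htT₀).le⟩
  have hvol : volume.real (S ∩ Icc 0 T) ≤ volume.real (S' ∩ Icc 0 T) + max T₀ 0 :=
    calc volume.real (S ∩ Icc 0 T) ≤ volume.real ((S' ∩ Icc 0 T) ∪ Icc 0 T₀) :=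
          measureReal_mono hcover (measure_union_ne_top (volume_inter_Icc_ne_top S' T) (by simp))
      _ ≤ volume.real (S' ∩ Icc 0 T) + volume.real (Icc 0 T₀) := measureReal_union_le _ _
      _ = volume.real (S' ∩ Icc 0 T) + max T₀ 0 := by rw [Real.volume_real_Icc, sub_zero]
  rw [← sub_div]
  exact div_le_div_of_nonneg_right (by linarith) hT.le

lemma HasDens.one_inter {S S' : Set ℝ} (hS : HasDens S 1) (hS' : HasDens S' 1)
    (hS'm : MeasurableSet S') : HasDens (S ∩ S') 1 := by
  have hlim : Tendsto (fun T => volume.real (S ∩ Icc 0 T) / T + volume.real (S' ∩ Icc 0 T) / T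
      - 1) atTop (𝓝 1) := by
    have h := (hS.add hS').sub_const 1
    rwa [add_sub_cancel_right] at h
  refine hasDens_one_of_tendsto_of_le hlim ?_
  filter_upwards [eventually_gt_atTop 0] with T hT
  have hvol : volume.real (S ∩ Icc 0 T) + volume.real (S' ∩ Icc 0 T)
      ≤ T + volume.real (S ∩ S' ∩ Icc 0 T) := by
    rw [← measureReal_union_add_inter (hS'm.inter measurableSet_Icc)
      (volume_inter_Icc_ne_top S T) (volume_inter_Icc_ne_top S' T), ← inter_inter_distrib_right,
      ← union_inter_distrib_right]
    gcongr
    exact volume_real_inter_Icc_le _ hT.le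
  rw [← add_div, div_sub_one hT.ne']
  exact div_le_div_of_nonneg_right (by linarith) hT.le

lemma measurableSet_setOf_nonneg_and_mem {X : Type*} [TopologicalSpace X] {g : ℝ → X}
    (hg : ContinuousOn g (Ici 0)) {U : Set X} (hU : IsOpen U) :
    MeasurableSet {t : ℝ | 0 ≤ t ∧ g t ∈ U} := by
  obtain ⟨V, hV, hVU⟩ := _root_.continuousOn_iff'.1 hg U hU
  have hset : {t : ℝ | 0 ≤ t ∧ g t ∈ U} = V ∩ Ici 0 := by
    rw [← hVU, inter_comm]; rfl
  rw [hset]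
  exact hV.measurableSet.inter measurableSet_Ici

lemma exists_thickening_inter_subset_thickening_inter {X : Type*} [MetricSpace X]
    {C₁ C₂ : Set X} (h₁ : IsCompact C₁) (h₂ : IsClosed C₂) {ε : ℝ} (hε : 0 < ε) :
    ∃ δ > 0, thickening δ C₁ ∩ thickening δ C₂ ⊆ thickening ε (C₁ ∩ C₂) := by
  -- the points of `C₁` far from `C₁ ∩ C₂` form a compact set disjoint from `C₂`
  have hfar : Disjoint (C₁ \ thickening (ε / 2) (C₁ ∩ C₂)) C₂ :=
    disjoint_left.2 fun c hc hc₂ => hc.2 (self_subset_thickening (half_pos hε) _ ⟨hc.1, hc₂⟩)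
  obtain ⟨δ, hδ, hdisj⟩ := hfar.exists_thickenings (h₁.diff isOpen_thickening) h₂
  refine ⟨min δ (ε / 2), lt_min hδ (half_pos hε), fun z ⟨hz₁, hz₂⟩ => ?_⟩
  obtain ⟨c, hc, hzc⟩ := mem_thickening_iff.1 hz₁
  by_cases hnear : c ∈ thickening (ε / 2) (C₁ ∩ C₂)
  · have hz : z ∈ thickening (ε / 2) (thickening (ε / 2) (C₁ ∩ C₂)) :=
      mem_thickening_iff.2 ⟨c, hnear, hzc.trans_le (min_le_right _ _)⟩
    rw [← add_halves ε]
    exact thickening_thickening_subset _ _ _ hz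
  · have hzfar : z ∈ thickening δ (C₁ \ thickening (ε / 2) (C₁ ∩ C₂)) :=
      mem_thickening_iff.2 ⟨c, ⟨hc, hnear⟩, hzc.trans_le (min_le_left _ _)⟩
    exact absurd (thickening_mono (min_le_left _ _) _ hz₂) (disjoint_left.1 hdisj hzfar)

lemma IsSemiflow.continuousOn_motion {X : Type*} [MetricSpace X] {f : ℝ → X → X}
    (hf : IsSemiflow f) (x : X) : ContinuousOn (fun t => f t x) (Ici 0) :=
  hf.1.comp (continuous_id.prodMk continuous_const).continuousOn fun _ ht => ⟨ht, mem_univ x⟩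

section Centers

variable {X : Type*} [MetricSpace X] {f : ℝ → X → X} {x q : X} {C C' : Set X}

lemma IsCtr.of_tendsto_dist (hC : IsCtr f q C)
    (h : Tendsto (fun t => dist (f t x) (f t q)) atTop (𝓝 0)) : IsCtr f x C := by
  refine ⟨hC.1, fun ε hε => ?_⟩
  obtain ⟨T₀, hT₀⟩ := Metric.tendsto_atTop.1 h (ε / 2) (half_pos hε)
  refine (hC.2 (ε / 2) (half_pos hε)).one_of_inter_Ici_subset (T₀ := T₀) ?_
  rintro t ⟨⟨ht0, htq⟩, htT₀⟩
  have hclose : dist (f t x) (f t q) < ε / 2 := by simpa using hT₀ t htT₀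
  refine ⟨ht0, ?_⟩
  rw [← add_halves ε]
  exact thickening_thickening_subset _ _ _ (mem_thickening_iff.2 ⟨f t q, htq, hclose⟩)

lemma IsCtr.inter (hx : ContinuousOn (fun t => f t x) (Ici 0)) (hC : IsCtr f x C)
    (hC' : IsCtr f x C') (hCc : IsCompact C) : IsCtr f x (C ∩ C') := by
  refine ⟨hC.1.inter hC'.1, fun ε hε => ?_⟩
  obtain ⟨δ, hδ, hsub⟩ := exists_thickening_inter_subset_thickening_inter hCc hC'.1 hε
  have hboth := (hC.2 δ hδ).one_inter (hC'.2 δ hδ)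
    (measurableSet_setOf_nonneg_and_mem hx isOpen_thickening)
  refine hboth.one_of_inter_Ici_subset (T₀ := 0) (inter_subset_left.trans ?_)
  rintro t ⟨⟨ht0, ht⟩, -, ht'⟩
  exact ⟨ht0, hsub ⟨ht, ht'⟩⟩

lemma IsMCA.subset_of_isCtr [CompactSpace X] (hx : ContinuousOn (fun t => f t x) (Ici 0))
    (hC : IsMCA f x C) (hC' : IsCtr f x C') : C ⊆ C' :=
  hC.2 (C ∩ C') inter_subset_left (hC.1.inter hx hC' hC.1.1.isCompact) ▸ inter_subset_right

end Centers

theorem mca_eq_of_asymptotic {X : Type*} [MetricSpace X] [CompactSpace X]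
    (f : ℝ → X → X) (hf : IsSemiflow f) (x q : X) (Cx Cq : Set X)
    (hx : IsMCA f x Cx) (hq : IsMCA f q Cq)
    (h : Filter.Tendsto (fun t : ℝ => dist (f t x) (f t q)) Filter.atTop (nhds 0)) :
    Cx = Cq := by
  have h' : Tendsto (fun t => dist (f t q) (f t x)) atTop (𝓝 0) := by
    simpa only [dist_comm] using h
  exact (hx.subset_of_isCtr (hf.continuousOn_motion x) (hq.1.of_tendsto_dist h)).antisymm
    (hq.subset_of_isCtr (hf.continuousOn_motion q) (hx.1.of_tendsto_dist h'))
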